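/- Fix k ∈ ℝ^d and let Λ be a real p×d matrix with full rank d. Then the map f(Λ) = det(ΛᵀΛ)^{1/d} · kᵀ(ΛᵀΛ)^{−1}k is Fréchet differentiable at every full-rank Λ with gradient g^{(k)}(Λ) = 2 det(ΛᵀΛ)^{1/d} Λ (ΛᵀΛ)^{−1} [ (1/d)(kᵀ(ΛᵀΛ)^{−1}k) I_d − k kᵀ (ΛᵀΛ)^{−1} ]; that is, the derivative is the linear map H ↦ tr(g^{(k)}(Λ)ᵀ H). -/

import Mathlib

open Matrix Real

attribute [local instance] Matrix.normedAddCommGroup Matrix.normedSpace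

/-- The continuous linear map `H ↦ tr(Gᵀ H)`, representing the gradient `G`. -/
noncomputable def gradCLM {p d : ℕ} (G : Matrix (Fin p) (Fin d) ℝ) :
    Matrix (Fin p) (Fin d) ℝ →L[ℝ] ℝ :=
  LinearMap.toContinuousLinearMap
    { toFun := fun H => (Gᵀ * H).trace
      map_add' := fun H₁ H₂ => by simp [Matrix.mul_add]
      map_smul' := fun c H => by simp [Matrix.mul_smul] }

/-- The gradient matrix `g^{(k)}(Λ)`. -/
noncomputable def gMat {p d : ℕ} (k : Fin d → ℝ) (Λ : Matrix (Fin p) (Fin d) ℝ) :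
    Matrix (Fin p) (Fin d) ℝ :=
  (2 * (Λᵀ * Λ).det ^ ((1 : ℝ) / d)) •
    (Λ * (Λᵀ * Λ)⁻¹ *
      (((k ⬝ᵥ ((Λᵀ * Λ)⁻¹ *ᵥ k)) / d) • (1 : Matrix (Fin d) (Fin d) ℝ) -
        Matrix.vecMulVec k k * (Λᵀ * Λ)⁻¹))

/-!
Write `M = ΛᵀΛ`, so that `f(Λ) = φ(ΛᵀΛ)` with `φ(M) = det(M)^{1/d} · kᵀM⁻¹k`. On square
matrices, Jacobi's formula gives the gradient `r det(M)^r M⁻ᵀ` of `det(M)^r`, and the derivative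
`H ↦ -M⁻¹HM⁻¹` of inversion gives the gradient `-M⁻ᵀkkᵀM⁻ᵀ` of `kᵀM⁻¹k`. Pulling a symmetric
gradient `S` back along `L ↦ LᵀL` turns it into `2ΛS`, and the product rule assembles the two
pieces into `g^{(k)}(Λ)`.
-/

lemma Matrix.mulVec_injective_of_rank_eq_card {K : Type*} [Field K] {m n : Type*}
    [Fintype n] {A : Matrix m n K} (hA : A.rank = Fintype.card n) :
    Function.Injective A.mulVec := by
  have hker := LinearMap.finrank_range_add_finrank_ker A.mulVecLin
  rw [Module.finrank_fintype_fun_eq_card] at hker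
  change A.rank + _ = _ at hker
  have : LinearMap.ker A.mulVecLin = ⊥ := Submodule.finrank_eq_zero.mp (by omega)
  exact LinearMap.ker_eq_bot.mp this

lemma Matrix.det_transpose_mul_self_pos {m n : Type*} [Fintype m] [Fintype n] [DecidableEq n]
    {A : Matrix m n ℝ} (hA : A.rank = Fintype.card n) : 0 < (Aᵀ * A).det := by
  simpa using (PosDef.conjTranspose_mul_self A (mulVec_injective_of_rank_eq_card hA)).det_pos

noncomputable def Matrix.detRowContinuousMultilinear (n : Type*) [Fintype n] [DecidableEq n] :
    ContinuousMultilinearMap ℝ (fun _ : n => n → ℝ) ℝ where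
  toMultilinearMap := (detRowAlternating : (n → ℝ) [⋀^n]→ₗ[ℝ] ℝ).toMultilinearMap
  cont := continuous_id.matrix_det

/-- Jacobi's formula. The derivative of the multilinear map `det` sends `H` to
`∑ i, det (M with row i replaced by H i)`, which Cramer's rule identifies with `tr(adj(M) H)`. -/
theorem Matrix.hasFDerivAt_det {d : ℕ} (M : Matrix (Fin d) (Fin d) ℝ) :
    HasFDerivAt det (gradCLM M.adjugateᵀ) M := by
  have h : HasFDerivAt (det : Matrix (Fin d) (Fin d) ℝ → ℝ)
      ((detRowContinuousMultilinear (Fin d)).linearDeriv M) M :=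
    (detRowContinuousMultilinear (Fin d)).hasFDerivAt M
  refine h.congr_fderiv <| ContinuousLinearMap.ext fun (H : Matrix (Fin d) (Fin d) ℝ) =>
    (ContinuousMultilinearMap.linearDeriv_apply _ _ _).trans ?_
  change ∑ i, det (M.updateRow i (H i)) = (M.adjugateᵀᵀ * H).trace
  simp_rw [← cramer_transpose_apply, cramer_eq_adjugate_mulVec, transpose_transpose,
    ← adjugate_transpose]
  simp only [trace, diag, mul_apply, mulVec, dotProduct, transpose_apply]
  exact Finset.sum_comm

section Inverse

variable {n : Type*} [Fintype n] [DecidableEq n]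

/-- Square matrices as operators on `n → ℝ`: unlike matrices with the sup norm, these form a
complete normed algebra, where the derivative of `Ring.inverse` is known. -/
noncomputable def Matrix.toCLMEquiv : Matrix n n ℝ ≃L[ℝ] (n → ℝ) →L[ℝ] n → ℝ :=
  (toLin'.trans LinearMap.toContinuousLinearMap).toContinuousLinearEquiv

lemma Matrix.toCLMEquiv_apply (A : Matrix n n ℝ) (v : n → ℝ) : toCLMEquiv A v = A *ᵥ v := rfl

lemma Matrix.toCLMEquiv_mul (A B : Matrix n n ℝ) :
    toCLMEquiv (A * B) = toCLMEquiv A * toCLMEquiv B := by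
  ext1 v
  simp [toCLMEquiv_apply, mulVec_mulVec]

lemma Matrix.toCLMEquiv_one : toCLMEquiv (1 : Matrix n n ℝ) = 1 := by
  ext1 v
  simp [toCLMEquiv_apply]

noncomputable def Matrix.toCLMUnit (A : Matrix n n ℝ) (hA : IsUnit A.det) :
    ((n → ℝ) →L[ℝ] n → ℝ)ˣ where
  val := toCLMEquiv A
  inv := toCLMEquiv A⁻¹
  val_inv := by rw [← toCLMEquiv_mul, mul_nonsing_inv A hA, toCLMEquiv_one]
  inv_val := by rw [← toCLMEquiv_mul, nonsing_inv_mul A hA, toCLMEquiv_one]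

lemma Matrix.inv_eq_toCLMEquiv_symm_ringInverse {A : Matrix n n ℝ} (hA : IsUnit A.det) :
    A⁻¹ = toCLMEquiv.symm (Ring.inverse (toCLMEquiv A)) := by
  rw [show toCLMEquiv A = (toCLMUnit A hA : (n → ℝ) →L[ℝ] n → ℝ) from rfl, Ring.inverse_unit]
  exact (toCLMEquiv.symm_apply_apply _).symm

theorem Matrix.hasFDerivAt_inv {M : Matrix n n ℝ} (hM : IsUnit M.det) :
    HasFDerivAt (fun A : Matrix n n ℝ => A⁻¹)
      (-(LinearMap.mulLeftRight ℝ (M⁻¹, M⁻¹)).toContinuousLinearMap) M := by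
  set e : Matrix n n ℝ ≃L[ℝ] (n → ℝ) →L[ℝ] n → ℝ := toCLMEquiv
  have hinv :=
    e.symm.hasFDerivAt.comp M ((hasFDerivAt_ringInverse (toCLMUnit M hM)).comp M e.hasFDerivAt)
  have hnear : ∀ᶠ A in nhds M, IsUnit A.det :=
    (continuous_id.matrix_det.continuousAt.eventually_ne hM.ne_zero).mono fun A hA => hA.isUnit
  refine (hinv.congr_of_eventuallyEq ?_).congr_fderiv ?_
  · filter_upwards [hnear] with A hA using inv_eq_toCLMEquiv_symm_ringInverse hA
  · ext1 H
    change e.symm (-(e M⁻¹ * e H * e M⁻¹)) = -(M⁻¹ * H * M⁻¹)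
    rw [← toCLMEquiv_mul, ← toCLMEquiv_mul, ← map_neg, ContinuousLinearEquiv.symm_apply_apply]

end Inverse

section SquareMatrix

variable {d : ℕ}

theorem Matrix.hasFDerivAt_det_rpow {M : Matrix (Fin d) (Fin d) ℝ} (hM : 0 < M.det) (r : ℝ) :
    HasFDerivAt (fun A : Matrix (Fin d) (Fin d) ℝ => A.det ^ r)
      (gradCLM ((r * M.det ^ r) • M⁻¹ᵀ)) M := by
  refine ((Real.hasDerivAt_rpow_const (p := r) (Or.inl hM.ne')).comp_hasFDerivAt M
    (hasFDerivAt_det M)).congr_fderiv (ContinuousLinearMap.ext fun H => ?_)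
  have hadj : M.adjugate = M.det • M⁻¹ := by
    rw [inv_def, smul_smul, Ring.mul_inverse_cancel _ hM.ne'.isUnit, one_smul]
  change r * M.det ^ (r - 1) * (M.adjugateᵀᵀ * H).trace
    = (((r * M.det ^ r) • M⁻¹ᵀ)ᵀ * H).trace
  simp only [hadj, transpose_transpose, transpose_smul, smul_mul, trace_smul, smul_eq_mul,
    Real.rpow_sub_one hM.ne']
  field_simp

noncomputable def Matrix.quadFormCLM {n : Type*} [Fintype n] (k : n → ℝ) :
    Matrix n n ℝ →L[ℝ] ℝ :=
  LinearMap.toContinuousLinearMap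
    { toFun := fun A => k ⬝ᵥ (A *ᵥ k)
      map_add' := fun A B => by simp [add_mulVec, dotProduct_add]
      map_smul' := fun c A => by simp [smul_mulVec, dotProduct_smul] }

theorem Matrix.hasFDerivAt_dotProduct_inv_mulVec (k : Fin d → ℝ) {M : Matrix (Fin d) (Fin d) ℝ}
    (hM : IsUnit M.det) :
    HasFDerivAt (fun A : Matrix (Fin d) (Fin d) ℝ => k ⬝ᵥ (A⁻¹ *ᵥ k))
      (gradCLM (-(M⁻¹ᵀ * vecMulVec k k * M⁻¹ᵀ))) M := by
  refine ((quadFormCLM k).hasFDerivAt.comp M (hasFDerivAt_inv hM)).congr_fderiv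
    (ContinuousLinearMap.ext fun H => ?_)
  change k ⬝ᵥ (-(M⁻¹ * H * M⁻¹) *ᵥ k) = ((-(M⁻¹ᵀ * vecMulVec k k * M⁻¹ᵀ))ᵀ * H).trace
  simp only [transpose_neg, transpose_mul, transpose_transpose, transpose_vecMulVec, neg_mul,
    trace_neg, neg_mulVec, dotProduct_neg, neg_inj]
  have hcycle : (M⁻¹ * (vecMulVec k k * M⁻¹) * H).trace
      = (vecMulVec k k * (M⁻¹ * H * M⁻¹)).trace := by
    rw [trace_mul_comm, ← Matrix.mul_assoc, trace_mul_comm]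
    simp only [Matrix.mul_assoc]
  rw [hcycle, vecMulVec_mul, trace_vecMulVec, dotProduct_mulVec, dotProduct_comm]

end SquareMatrix

section Gram

variable {p d : ℕ}

noncomputable def Matrix.transposeMulCLM (m n l : Type*) [Fintype m] [Fintype n] [Fintype l] :
    Matrix m n ℝ →L[ℝ] Matrix m l ℝ →L[ℝ] Matrix n l ℝ :=
  ((mulLinearMap ℝ).comp (transposeLinearEquiv m n ℝ ℝ).toLinearMap).toContinuousBilinearMap

lemma Matrix.trace_mul_transpose_mul_add {S : Matrix (Fin d) (Fin d) ℝ} (hS : Sᵀ = S)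
    (Λ H : Matrix (Fin p) (Fin d) ℝ) :
    (Sᵀ * (Λᵀ * H + Hᵀ * Λ)).trace = (((2 : ℝ) • (Λ * S))ᵀ * H).trace := by
  have : (S * (Hᵀ * Λ)).trace = (S * (Λᵀ * H)).trace := by
    rw [← trace_transpose, transpose_mul, transpose_mul, transpose_transpose, hS, trace_mul_comm]
  rw [hS, Matrix.mul_add, trace_add, this, transpose_smul, transpose_mul, hS, smul_mul,
    trace_smul, smul_eq_mul, two_mul, Matrix.mul_assoc]

theorem HasFDerivAt.comp_transpose_mul_self {φ : Matrix (Fin d) (Fin d) ℝ → ℝ}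
    {Λ : Matrix (Fin p) (Fin d) ℝ} {S : Matrix (Fin d) (Fin d) ℝ} (hS : Sᵀ = S)
    (hφ : HasFDerivAt φ (gradCLM S) (Λᵀ * Λ)) :
    HasFDerivAt (fun L : Matrix (Fin p) (Fin d) ℝ => φ (Lᵀ * L))
      (gradCLM ((2 : ℝ) • (Λ * S))) Λ := by
  have hgram := (transposeMulCLM (Fin p) (Fin d) (Fin d)).hasFDerivAt_of_bilinear
    (hasFDerivAt_id Λ) (hasFDerivAt_id Λ)
  refine (hφ.comp Λ (f := fun L => Lᵀ * L) hgram).congr_fderiv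
    (ContinuousLinearMap.ext fun H => ?_)
  exact trace_mul_transpose_mul_add hS Λ H

theorem HasFDerivAt.mul_gradCLM {f g : Matrix (Fin p) (Fin d) ℝ → ℝ}
    {G G' Λ : Matrix (Fin p) (Fin d) ℝ} (hf : HasFDerivAt f (gradCLM G) Λ)
    (hg : HasFDerivAt g (gradCLM G') Λ) :
    HasFDerivAt (fun L => f L * g L) (gradCLM (f Λ • G' + g Λ • G)) Λ := by
  refine (hf.mul hg).congr_fderiv (ContinuousLinearMap.ext fun H => ?_)
  change f Λ * (G'ᵀ * H).trace + g Λ * (Gᵀ * H).trace = ((f Λ • G' + g Λ • G)ᵀ * H).trace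
  simp only [transpose_add, transpose_smul, Matrix.add_mul, smul_mul, trace_add, trace_smul,
    smul_eq_mul]

end Gram

theorem stmt12_general (p d : ℕ)
    (k : Fin d → ℝ)
    (Λ : Matrix (Fin p) (Fin d) ℝ) (hΛ : Λ.rank = d) :
    HasFDerivAt
      (fun L : Matrix (Fin p) (Fin d) ℝ =>
        (Lᵀ * L).det ^ ((1 : ℝ) / d) * (k ⬝ᵥ ((Lᵀ * L)⁻¹ *ᵥ k)))
      (gradCLM (gMat k Λ)) Λ := by
  have hdet : 0 < (Λᵀ * Λ).det := det_transpose_mul_self_pos (by rwa [Fintype.card_fin])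
  have hsymm : (Λᵀ * Λ)⁻¹ᵀ = (Λᵀ * Λ)⁻¹ := by
    rw [transpose_nonsing_inv, transpose_mul, transpose_transpose]
  have hpow := (hasFDerivAt_det_rpow hdet ((1 : ℝ) / d)).comp_transpose_mul_self
    (by rw [transpose_smul, transpose_transpose, hsymm])
  have hquad := (hasFDerivAt_dotProduct_inv_mulVec k hdet.ne'.isUnit).comp_transpose_mul_self
    (by simp only [transpose_neg, transpose_mul, transpose_vecMulVec, Matrix.mul_assoc, hsymm])
  convert hpow.mul_gradCLM hquad using 2
  rw [hsymm]
  simp only [gMat, Matrix.mul_sub, Matrix.mul_smul, Matrix.mul_one, Matrix.mul_neg,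
    Matrix.mul_assoc]
  module

theorem stmt12 (p d : ℕ) (hd : 1 ≤ d) (hdp : d ≤ p)
    (k : Fin d → ℝ)
    (Λ : Matrix (Fin p) (Fin d) ℝ) (hΛ : Λ.rank = d) :
    HasFDerivAt
      (fun L : Matrix (Fin p) (Fin d) ℝ =>
        (Lᵀ * L).det ^ ((1 : ℝ) / d) * (k ⬝ᵥ ((Lᵀ * L)⁻¹ *ᵥ k)))
      (gradCLM (gMat k Λ)) Λ :=
  stmt12_general p d k Λ hΛ
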